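/- arXiv:2502.12432 — 2 statements merged into one kernel-verified Lean document; each statement's English description precedes it below -/
import Mathlib

section
/- Let D be an (N+1)×(N+1) matrix with null space equal to the span of the all-ones vector, let H ∈ ℝ^{N+1} be a 0-1 vector with H_i = 0 for i ≤ i* and H_i = 1 for i > i*, with 0 ≤ i* < N. If u ∈ ℝ^{N+1} has all components nonzero and satisfies u ∗ (D u) = (2u / (u_{i*} + u_{i*+1})) ∗ (D H) componentwise, with u₀ = β > 0, then u = (α − β)H + β·1 where α = ±√(2 + β²). In particular u_i = β for i ≤ i* and u_i = α for i > i*. -/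
/-- Steady-state characterization for the scaled Burgers discretization. -/
theorem stmt_2 (N : ℕ) (D : Matrix (Fin (N + 1)) (Fin (N + 1)) ℝ)
    (hker : ∀ v : Fin (N + 1) → ℝ, D.mulVec v = 0 ↔ ∃ γ : ℝ, v = fun _ => γ)
    (istar : Fin N) (H : Fin (N + 1) → ℝ)
    (hH : ∀ i : Fin (N + 1), H i = if i ≤ istar.castSucc then 0 else 1)
    (u : Fin (N + 1) → ℝ) (β : ℝ) (hβ : 0 < β)
    (hu0 : u 0 = β)
    (hne : ∀ i, u i ≠ 0)
    (hsum : u istar.castSucc + u istar.succ ≠ 0)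
    (heq : ∀ i, u i * (D.mulVec u) i =
      (2 * u i / (u istar.castSucc + u istar.succ)) * (D.mulVec H) i) :
    ∃ α : ℝ, (α = Real.sqrt (2 + β ^ 2) ∨ α = -Real.sqrt (2 + β ^ 2)) ∧
      (∀ i, u i = (α - β) * H i + β) ∧
      (∀ i, i ≤ istar.castSucc → u i = β) ∧
      (∀ i, istar.castSucc < i → u i = α) := by
  set s := u istar.castSucc + u istar.succ with hs
  -- (D u) i = (2/s) * (D H) i for all i
  have hDu : ∀ i, (D.mulVec u) i = (2 / s) * (D.mulVec H) i := by
    intro i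
    have h := heq i
    have : u i * (D.mulVec u) i = u i * ((2 / s) * (D.mulVec H) i) := by
      rw [h]; ring
    exact mul_left_cancel₀ (hne i) this
  -- D (u - (2/s) H) = 0
  have hker' : D.mulVec (fun i => u i - (2 / s) * H i) = 0 := by
    have : (fun i => u i - (2 / s) * H i) = u - (2 / s) • H := by
      funext i; simp [Pi.sub_apply, Pi.smul_apply, smul_eq_mul]
    rw [this, Matrix.mulVec_sub, Matrix.mulVec_smul]
    funext i
    simp [Pi.sub_apply, Pi.smul_apply, smul_eq_mul, hDu i]
  obtain ⟨γ, hγ⟩ := (hker _).mp hker'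
  have hu : ∀ i, u i = γ + (2 / s) * H i := by
    intro i
    have := congrFun hγ i
    linarith
  have hH0 : H 0 = 0 := by rw [hH]; simp [Fin.zero_le]
  have hγβ : γ = β := by
    have := hu 0
    rw [hu0, hH0] at this
    linarith
  rw [hγβ] at hu
  have hHc : H istar.castSucc = 0 := by rw [hH]; simp
  have hHs : H istar.succ = 1 := by
    rw [hH]
    have : ¬ istar.succ ≤ istar.castSucc := not_le.mpr (Fin.castSucc_lt_succ : istar.castSucc < istar.succ)
    simp [this]
  have huc : u istar.castSucc = β := by rw [hu, hHc]; ring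
  have hus : u istar.succ = β + 2 / s := by rw [hu, hHs]; ring
  set α := β + 2 / s with hα
  have hsval : s = β + α := by rw [hs, huc, hus]
  have hα2 : α ^ 2 = 2 + β ^ 2 := by
    have h1 : α * s = β * s + 2 := by
      rw [hα]; field_simp
    rw [hsval] at h1
    nlinarith
  refine ⟨α, ?_, ?_, ?_, ?_⟩
  · have hr : (Real.sqrt (2 + β ^ 2)) ^ 2 = 2 + β ^ 2 :=
      Real.sq_sqrt (by positivity)
    have : (α - Real.sqrt (2 + β ^ 2)) * (α + Real.sqrt (2 + β ^ 2)) = 0 := by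
      nlinarith
    rcases mul_eq_zero.mp this with h | h
    · left; linarith
    · right; linarith
  · intro i
    rw [hu i]
    have : α - β = 2 / s := by rw [hα]; ring
    rw [this]; ring
  · intro i hi
    rw [hu i, hH]
    simp [hi]
  · intro i hi
    rw [hu i, hH]
    have : ¬ i ≤ istar.castSucc := not_le.mpr hi
    simp only [this, if_false]
    rw [hα]; ring
end

section
/- Let D ∈ ℝ^{(N+1)×(N+1)} have null space span{1}, let H be the discrete Heaviside vector at index i* (H_i = 0 for i ≤ i*, 1 for i > i*), m ≥ 2 an integer, and β > 0. If u ∈ ℝ^{N+1} has all components nonzero, u₀ = β, and satisfies u^{m−1} ∗ (Du) = (m·u^{m−1} / S) ∗ (DH) where S = Σ_{j=1}^{m} u_{i*}^{m−j} u_{i*+1}^{j−1} ≠ 0, then u = (α − β)H + β·1 where α satisfies α^m = m + β^m or corresponds to another real m-th root; in particular u_i = β for i ≤ i*, and u_{i*+1} = m/S + β. -/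
/-- Steady-state characterization for the higher-degree equation under the
proposed consistent scaling. -/
theorem stmt_11 (N : ℕ) (D : Matrix (Fin (N + 1)) (Fin (N + 1)) ℝ)
    (hker : ∀ v : Fin (N + 1) → ℝ, D.mulVec v = 0 ↔ ∃ γ : ℝ, v = fun _ => γ)
    (istar : Fin N) (H : Fin (N + 1) → ℝ)
    (hH : ∀ i : Fin (N + 1), H i = if i ≤ istar.castSucc then 0 else 1)
    (m : ℕ) (hm : 2 ≤ m) (u : Fin (N + 1) → ℝ) (β : ℝ) (hβ : 0 < β)
    (hu0 : u 0 = β) (hne : ∀ i, u i ≠ 0)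
    (S : ℝ)
    (hS : S = ∑ j ∈ Finset.range m, u istar.castSucc ^ (m - 1 - j) * u istar.succ ^ j)
    (hS0 : S ≠ 0)
    (heq : ∀ i, u i ^ (m - 1) * (D.mulVec u) i =
      ((m : ℝ) * u i ^ (m - 1) / S) * (D.mulVec H) i) :
    ∃ α : ℝ, (∀ i, u i = (α - β) * H i + β) ∧
      (∀ i, i ≤ istar.castSucc → u i = β) ∧
      u istar.succ = (m : ℝ) / S + β ∧ α = (m : ℝ) / S + β := by
  set c : ℝ := (m : ℝ) / S with hc
  have hDu : ∀ i, (D.mulVec u) i = c * (D.mulVec H) i := by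
    intro i
    have h := heq i
    have hp : u i ^ (m - 1) ≠ 0 := pow_ne_zero _ (hne i)
    have : u i ^ (m - 1) * (D.mulVec u) i = u i ^ (m - 1) * (c * (D.mulVec H) i) := by
      rw [h]; ring
    exact mul_left_cancel₀ hp this
  have hker' : D.mulVec (u - c • H) = 0 := by
    rw [Matrix.mulVec_sub, Matrix.mulVec_smul]
    funext i
    simp [hDu i]
  obtain ⟨γ, hγ⟩ := (hker _).mp hker'
  have huH : ∀ i, u i = c * H i + γ := by
    intro i
    have := congrFun hγ i
    simp [Pi.sub_apply, Pi.smul_apply, smul_eq_mul] at this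
    linarith
  have hH0 : H 0 = 0 := by
    rw [hH]; simp [Fin.zero_le]
  have hγβ : γ = β := by
    have := huH 0
    rw [hH0, hu0] at this
    linarith
  refine ⟨c + β, ?_, ?_, ?_, rfl⟩
  · intro i
    rw [huH i, hγβ]; ring
  · intro i hi
    rw [huH i, hγβ, hH]
    simp [hi]
  · have hsucc : ¬ (istar.succ ≤ istar.castSucc) :=
      not_le.mpr (Fin.castSucc_lt_succ (i := istar))
    rw [huH istar.succ, hγβ, hH]
    simp [hsucc]
end
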